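/- Let u₀, ..., uₛ ∈ ℝˢ be affinely independent points (vertices of a nondegenerate s-simplex). For any point c ∈ ℝᵈ and radii ρⱼ ≥ 0 for j in a subset τ ⊆ {0,...,s} with |τ| ≤ s + 1, there exist a center y ∈ ℝ^{d+s} and a radius R ≥ 0 such that for all j ∈ τ, dist(y, ℝᵈ + uⱼ)² + ρⱼ² = R² and the orthogonal projection of y onto ℝᵈ + uⱼ equals c + uⱼ. That is, the intersection of the sphere S(y, R) ⊆ ℝ^{d+s} with the affine subspace ℝᵈ + uⱼ is the sphere in that subspace with center c + uⱼ and radius ρⱼ. -/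

import Mathlib

open RealInnerProductSpace

lemma exists_inner_eq_of_linearIndependent {ι : Type*} {E : Type*}
    [NormedAddCommGroup E] [InnerProductSpace ℝ E] [FiniteDimensional ℝ E]
    {v : ι → E} (hv : LinearIndependent ℝ v) (b : ι → ℝ) :
    ∃ z : E, ∀ i, ⟪v i, z⟫ = b i := by
  set W := Submodule.span ℝ (Set.range v)
  let B : Module.Basis ι ℝ W := Module.Basis.span hv
  let φ : W →ₗ[ℝ] ℝ := B.constr ℝ b
  let z : W := (InnerProductSpace.toDual ℝ W).symm (LinearMap.toContinuousLinearMap φ)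
  refine ⟨(z : E), fun i => ?_⟩
  have h1 : ⟪z, B i⟫ = φ (B i) := InnerProductSpace.toDual_symm_apply
  have h2 : φ (B i) = b i := B.constr_basis ℝ b i
  have h3 : ((B i : W) : E) = v i := congrArg Subtype.val (Module.Basis.span_apply hv i)
  have h4 : ⟪(z : E), ((B i : W) : E)⟫ = ⟪z, B i⟫ := rfl
  rw [real_inner_comm, ← h3, h4, h1, h2]

/-- Given affinely independent `u₀, ..., uₛ ∈ ℝˢ`, a center `c ∈ ℝᵈ`, and
nonnegative radii `ρⱼ` for `j` in a subset `τ ⊆ {0,...,s}`, there is a point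
`y ∈ ℝᵈ × ℝˢ` and a radius `R ≥ 0` such that for each `j ∈ τ` the sphere
`S(y,R)` meets the affine subspace `ℝᵈ + uⱼ` in the sphere with center `c + uⱼ`
and radius `ρⱼ`: the projection of `y` to `ℝᵈ` is `c` and
`dist(y, ℝᵈ + uⱼ)² + ρⱼ² = R²`. -/
theorem exists_sphere_through_stack
    (d s : ℕ) (u : Fin (s + 1) → EuclideanSpace ℝ (Fin s))
    (hu : AffineIndependent ℝ u)
    (c : EuclideanSpace ℝ (Fin d)) (τ : Finset (Fin (s + 1)))
    (ρ : Fin (s + 1) → ℝ) (hρ : ∀ j ∈ τ, 0 ≤ ρ j) :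
    ∃ (y : EuclideanSpace ℝ (Fin d) × EuclideanSpace ℝ (Fin s)) (R : ℝ),
      0 ≤ R ∧ y.1 = c ∧
      ∀ j ∈ τ, dist y.2 (u j) ^ 2 + ρ j ^ 2 = R ^ 2 := by
  rcases τ.eq_empty_or_nonempty with rfl | ⟨j0, hj0⟩
  · exact ⟨(c, 0), 0, le_refl 0, rfl, fun j hj => absurd hj (by simp)⟩
  · have hli : LinearIndependent ℝ fun i : {x : Fin (s+1) // x ≠ j0} => u i -ᵥ u j0 :=
      (affineIndependent_iff_linearIndependent_vsub ℝ u j0).mp hu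
    obtain ⟨z, hz⟩ := exists_inner_eq_of_linearIndependent hli
      (fun i => (‖u i‖ ^ 2 + ρ i ^ 2 - ‖u j0‖ ^ 2 - ρ j0 ^ 2) / 2)
    have hkey : ∀ j, dist z (u j) ^ 2 + ρ j ^ 2 = dist z (u j0) ^ 2 + ρ j0 ^ 2 := by
      intro j
      rcases eq_or_ne j j0 with rfl | hne
      · rfl
      · have h := hz ⟨j, hne⟩
        have hvsub : (u j -ᵥ u j0 : EuclideanSpace ℝ (Fin s)) = u j - u j0 := rfl
        rw [hvsub, inner_sub_left] at h
        have e1 : dist z (u j) ^ 2 = ‖z‖ ^ 2 - 2 * ⟪z, u j⟫ + ‖u j‖ ^ 2 := by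
          rw [dist_eq_norm, @norm_sub_sq_real]
        have e2 : dist z (u j0) ^ 2 = ‖z‖ ^ 2 - 2 * ⟪z, u j0⟫ + ‖u j0‖ ^ 2 := by
          rw [dist_eq_norm, @norm_sub_sq_real]
        have c1 : ⟪u j, z⟫ = ⟪z, u j⟫ := real_inner_comm _ _
        have c2 : ⟪u j0, z⟫ = ⟪z, u j0⟫ := real_inner_comm _ _
        rw [e1, e2]; linarith
    have hR0 : 0 ≤ dist z (u j0) ^ 2 + ρ j0 ^ 2 :=
      add_nonneg (sq_nonneg _) (sq_nonneg _)
    refine ⟨(c, z), Real.sqrt (dist z (u j0) ^ 2 + ρ j0 ^ 2), Real.sqrt_nonneg _, rfl,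
      fun j hj => ?_⟩
    rw [Real.sq_sqrt hR0]
    exact hkey j
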